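/- The only rational solutions of x³ + y³ = 1 are (x, y) = (1, 0) and (x, y) = (0, 1). Equivalently, the group of rational points of the elliptic curve E₁ = X₀(27) has exactly three elements. -/

import Mathlib

/-!
The first part is Fermat's Last Theorem for exponent 3 over `ℚ`: if `xy ≠ 0`, then
`x³ + y³ = 1³` has no solution. For the second, `(x, y) ↦ ((36 + y) / 6x, (36 - y) / 6x)` sends
an affine point of `y² = x³ - 432` (necessarily with `x ≠ 0`) to a rational point of
`u³ + v³ = 1`, and the two solutions `(1, 0)`, `(0, 1)` pull back to `(12, 36)`, `(12, -36)`.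
-/

open WeierstrassCurve

theorem fermatLastTheoremWith_rat_three : FermatLastTheoremWith ℚ 3 :=
  fermatLastTheoremFor_iff_rat.mp fermatLastTheoremThree

section OrderedField

variable {K : Type*} [Field K] [LinearOrder K] [IsStrictOrderedRing K]

lemma eq_one_of_pow_three_eq_one {t : K} (h : t ^ 3 = 1) : t = 1 :=
  (Odd.pow_inj (by decide)).mp (h.trans (one_pow 3).symm)

lemma eq_or_eq_of_pow_three_add_pow_three_eq_one (hK : FermatLastTheoremWith K 3) {x y : K}
    (h : x ^ 3 + y ^ 3 = 1) : (x, y) = (1, 0) ∨ (x, y) = (0, 1) := by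
  by_cases hx : x = 0
  · subst hx
    exact .inr (by simp [eq_one_of_pow_three_eq_one (t := y) (by simpa using h)])
  by_cases hy : y = 0
  · subst hy
    exact .inl (by simp [eq_one_of_pow_three_eq_one (t := x) (by simpa using h)])
  exact absurd h (by simpa using hK x y 1 hx hy one_ne_zero)

end OrderedField

lemma cube_add_cube_eq_one_of_sq_eq_cube_sub {K : Type*} [Field K] (h6 : (6 : K) ≠ 0)
    {x y : K} (hx : x ≠ 0) (h : y ^ 2 = x ^ 3 - 432) :
    ((36 + y) / (6 * x)) ^ 3 + ((36 - y) / (6 * x)) ^ 3 = 1 := by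
  field_simp
  linear_combination 216 * h

def E₁ : WeierstrassCurve.Affine ℚ := { a₁ := 0, a₂ := 0, a₃ := 0, a₄ := 0, a₆ := -432 }

instance : E₁.IsElliptic := by
  rw [isElliptic_iff, isUnit_iff_ne_zero]
  simp [E₁, Δ, b₂, b₄, b₆, b₈]

lemma E₁_equation_iff {x y : ℚ} : E₁.Equation x y ↔ y ^ 2 = x ^ 3 - 432 := by
  rw [Affine.equation_iff]
  simp only [E₁]
  constructor <;> intro h <;> linarith

lemma E₁_equation_iff_eq {x y : ℚ} : E₁.Equation x y ↔ x = 12 ∧ (y = 36 ∨ y = -36) := by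
  rw [E₁_equation_iff]
  constructor
  · intro h
    have hx : x ≠ 0 := by
      rintro rfl
      nlinarith [sq_nonneg y]
    rcases eq_or_eq_of_pow_three_add_pow_three_eq_one fermatLastTheoremWith_rat_three
      (cube_add_cube_eq_one_of_sq_eq_cube_sub (by norm_num) hx h) with huv | huv <;>
      simp only [Prod.ext_iff] at huv <;> field_simp at huv
    · exact ⟨by linarith, .inl (by linarith)⟩
    · exact ⟨by linarith, .inr (by linarith)⟩
  · rintro ⟨rfl, rfl | rfl⟩ <;> norm_num

lemma E₁_natCard_point : Nat.card E₁.Point = 3 := by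
  let P (y : ℚ) (hy : y = 36 ∨ y = -36) : E₁.Point :=
    Affine.Point.mk (E₁_equation_iff_eq.mpr ⟨rfl, hy⟩)
  rw [← Set.ncard_univ, Set.ncard_eq_three]
  refine ⟨.zero, P 36 (.inl rfl), P (-36) (.inr rfl), by simp [P, Affine.Point.mk],
    by simp [P, Affine.Point.mk], by simp [P, Affine.Point.mk]; norm_num, ?_⟩
  refine (Set.eq_univ_of_forall ?_).symm
  rintro (_ | @⟨x, y, h⟩)
  · simp
  obtain ⟨rfl, hy⟩ := E₁_equation_iff_eq.mp h.1
  rcases hy with rfl | rfl <;> simp [P, Affine.Point.mk]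

/-- The only rational solutions of `x³ + y³ = 1` are `(1, 0)` and `(0, 1)`.
Equivalently, the group of rational points of the elliptic curve
`E₁ = X₀(27) : y² = x³ - 432` has exactly three elements. -/
theorem fermat_cubic_rational_points :
    (∀ x y : ℚ, x ^ 3 + y ^ 3 = 1 → (x, y) = (1, 0) ∨ (x, y) = (0, 1)) ∧
    Nat.card (WeierstrassCurve.Affine.Point
      ({ a₁ := 0, a₂ := 0, a₃ := 0, a₄ := 0, a₆ := -432 } :
        WeierstrassCurve.Affine ℚ)) = 3 :=
  ⟨fun _ _ => eq_or_eq_of_pow_three_add_pow_three_eq_one fermatLastTheoremWith_rat_three,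
    E₁_natCard_point⟩
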